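/- For every y ∈ ℝⁿ, the noise-free estimator equals SURE applied to the Gaussian-smoothed prediction function: ‖y − (g*φ_{ασ²})(y)‖₂² + (2/√α) E_{ω~N(0,σ²Iₙ)}[ ωᵀ g(y + √α ω) ] = ‖y − (g*φ_{ασ²})(y)‖₂² + 2σ² ∇·(g*φ_{ασ²})(y); that is, 𝐶𝑉̄_α(y) = SURE(g*φ_{ασ²})(y), where 𝐶𝑉̄_α(y) = ‖y − E[g(y+√αω)]‖₂² + (2/√α) E[ωᵀ g(y+√αω)] and SURE(h)(y) = ‖y − h(y)‖₂² + 2σ² ∇·h(y). -/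

import Mathlib

open MeasureTheory Filter Topology

/-- Density of the Gaussian distribution `N(0, τ²Iₙ)` on `ℝⁿ`. -/
noncomputable def gpdf (n : ℕ) (τ2 : ℝ) (z : Fin n → ℝ) : ℝ :=
  (2 * Real.pi * τ2) ^ (-(n : ℝ) / 2) * Real.exp (-(∑ i, (z i) ^ 2) / (2 * τ2))

/-- The Gaussian measure `N(θ, τ²Iₙ)` on `ℝⁿ`. -/
noncomputable def gauss (n : ℕ) (θ : Fin n → ℝ) (τ2 : ℝ) : Measure (Fin n → ℝ) :=
  volume.withDensity fun y => ENNReal.ofReal (gpdf n τ2 (y - θ))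

/-- Componentwise convolution `(g * φ_{τ²})(y) = ∫ g(y − z) φ_{τ²}(z) dz`. -/
noncomputable def smoothed (n : ℕ) (τ2 : ℝ) (g : (Fin n → ℝ) → (Fin n → ℝ))
    (y : Fin n → ℝ) : Fin n → ℝ :=
  fun i => ∫ z, g (y - z) i * gpdf n τ2 z

/-- Divergence `∇·h(y) = ∑ᵢ ∂hᵢ/∂yᵢ(y)` of `h : ℝⁿ → ℝⁿ`. -/
noncomputable def diverg (n : ℕ) (h : (Fin n → ℝ) → (Fin n → ℝ)) (y : Fin n → ℝ) : ℝ :=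
  ∑ i, fderiv ℝ (fun u => h u i) y (Pi.single i 1)

/-!
Substituting `x = y + √α • ω` turns the correlation `E[ωᵀ g(y + √α ω)]` into
`-(1/√α) ∫ ⟨y - x, g x⟩ φ_{ασ²}(y - x) dx`. Since `∂ᵢ φ_τ(z) = -(zᵢ/τ) φ_τ(z)`,
differentiating the convolution under the integral sign gives
`∇·(g * φ_τ)(y) = -(1/τ) ∫ ⟨y - x, g x⟩ φ_τ(y - x) dx`, and with `τ = ασ²` both sides of the
identity carry the same multiple of this integral.

The hypotheses control `g` only against Gaussians of variance `ασ²`, centred anywhere. To dominate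
the derivative locally uniformly, `φ_τ(v + d)` with `‖d‖∞ ≤ 1` is bounded by `e^{n/(2τ)}` times the
sum of `φ_τ(v - s)` over the `2ⁿ` sign vectors `s`; coordinatewise this is
`-(v + d)² ≤ 1 - (v - s)²` for `s` the sign of `v`.
-/

section DotProduct

variable {ι : Type*} [Fintype ι]

def dotProductCLM (w : ι → ℝ) : (ι → ℝ) →L[ℝ] ℝ :=
  ∑ i, w i • ContinuousLinearMap.proj i

@[simp]
lemma dotProductCLM_apply (w v : ι → ℝ) : dotProductCLM w v = ∑ i, w i * v i := by
  simp [dotProductCLM]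

lemma dotProductCLM_single [DecidableEq ι] (w : ι → ℝ) (i : ι) :
    dotProductCLM w (Pi.single i 1) = w i := by
  simp [Pi.single_apply]

lemma continuous_dotProductCLM : Continuous (dotProductCLM : (ι → ℝ) → (ι → ℝ) →L[ℝ] ℝ) :=
  continuous_finsetSum _ fun i _ => (continuous_apply i).smul continuous_const

lemma norm_dotProductCLM_le (w : ι → ℝ) : ‖dotProductCLM w‖ ≤ Fintype.card ι * ‖w‖ := by
  refine ContinuousLinearMap.opNorm_le_bound _ (by positivity) fun v => ?_
  calc ‖dotProductCLM w v‖ ≤ ∑ i, ‖w i‖ * ‖v i‖ := by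
        simpa only [dotProductCLM_apply, norm_mul] using norm_sum_le Finset.univ fun i => w i * v i
    _ ≤ ∑ _i : ι, ‖w‖ * ‖v‖ := by
        gcongr with i <;> exact norm_le_pi_norm _ i
    _ = Fintype.card ι * ‖w‖ * ‖v‖ := by simp [mul_assoc]

lemma norm_le_sqrt_sum_sq (w : ι → ℝ) : ‖w‖ ≤ √(∑ i, w i ^ 2) :=
  (pi_norm_le_iff_of_nonneg (Real.sqrt_nonneg _)).2 fun i =>
    Real.abs_le_sqrt (Finset.single_le_sum (f := fun j => w j ^ 2) (fun j _ => sq_nonneg (w j))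
      (Finset.mem_univ i))

end DotProduct

lemma exp_neg_add_sq_div_le {τ : ℝ} (hτ : 0 < τ) (v : ℝ) {d : ℝ} (hd : |d| ≤ 1) :
    Real.exp (-(v + d) ^ 2 / (2 * τ))
      ≤ Real.exp (1 / (2 * τ)) * ∑ s ∈ ({-1, 1} : Finset ℝ), Real.exp (-(v - s) ^ 2 / (2 * τ)) := by
  obtain ⟨hd₁, hd₂⟩ := abs_le.1 hd
  obtain ⟨s, hs, hvs⟩ : ∃ s ∈ ({-1, 1} : Finset ℝ), -(v + d) ^ 2 ≤ 1 - (v - s) ^ 2 := by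
    rcases le_total 0 v with hv | hv
    · exact ⟨1, by simp, by nlinarith [mul_nonneg hv (by linarith : (0 : ℝ) ≤ 1 + d)]⟩
    · exact ⟨-1, by simp,
        by nlinarith [mul_nonneg_of_nonpos_of_nonpos hv (by linarith : d - 1 ≤ 0)]⟩
  calc Real.exp (-(v + d) ^ 2 / (2 * τ))
      ≤ Real.exp (1 / (2 * τ) + -(v - s) ^ 2 / (2 * τ)) := by
        rw [Real.exp_le_exp, ← add_div]
        gcongr
        linarith
    _ ≤ _ := by
        rw [Real.exp_add]
        gcongr
        exact Finset.single_le_sum (f := fun s => Real.exp (-(v - s) ^ 2 / (2 * τ)))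
          (fun _ _ => (Real.exp_pos _).le) hs

noncomputable def signVectors (n : ℕ) : Finset (Fin n → ℝ) :=
  Fintype.piFinset fun _ => {-1, 1}

lemma norm_le_one_of_mem_signVectors {n : ℕ} {s : Fin n → ℝ} (hs : s ∈ signVectors n) :
    ‖s‖ ≤ 1 :=
  (pi_norm_le_iff_of_nonneg zero_le_one).2 fun i => by
    have := Fintype.mem_piFinset.1 hs i
    simp only [Finset.mem_insert, Finset.mem_singleton] at this
    rcases this with h | h <;> simp [h]

section Gaussian

variable {n : ℕ} {τ : ℝ}

lemma gpdf_nonneg (hτ : 0 ≤ τ) (z : Fin n → ℝ) : 0 ≤ gpdf n τ z := by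
  unfold gpdf; positivity

lemma continuous_gpdf : Continuous (gpdf n τ) := by
  unfold gpdf; fun_prop

lemma gpdf_neg (z : Fin n → ℝ) : gpdf n τ (-z) = gpdf n τ z := by
  simp [gpdf]

lemma gpdf_eq_mul_prod (z : Fin n → ℝ) :
    gpdf n τ z = (2 * Real.pi * τ) ^ (-(n : ℝ) / 2) * ∏ i, Real.exp (-z i ^ 2 / (2 * τ)) := by
  rw [gpdf, ← Real.exp_sum, ← Finset.sum_div, Finset.sum_neg_distrib]

lemma inv_pow_mul_gpdf_inv_smul (hτ : 0 ≤ τ) {c : ℝ} (hc : 0 < c) (v : Fin n → ℝ) :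
    (c ^ n)⁻¹ * gpdf n τ (c⁻¹ • v) = gpdf n (c ^ 2 * τ) v := by
  have hpow : (c ^ 2) ^ (-(n : ℝ) / 2) = (c ^ n)⁻¹ := by
    rw [← Real.rpow_natCast c 2, ← Real.rpow_mul hc.le, Nat.cast_ofNat,
      show (2 : ℝ) * (-(n : ℝ) / 2) = -n by ring, Real.rpow_neg hc.le, Real.rpow_natCast]
  have hsum : ∑ i, (c⁻¹ • v) i ^ 2 = (c ^ 2)⁻¹ * ∑ i, v i ^ 2 := by
    simp [Finset.mul_sum, mul_pow, inv_pow]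
  have hexp : -((c ^ 2)⁻¹ * ∑ i, v i ^ 2) / (2 * τ) = -(∑ i, v i ^ 2) / (2 * (c ^ 2 * τ)) := by
    field_simp
  rw [gpdf, gpdf, hsum, hexp, show 2 * Real.pi * (c ^ 2 * τ) = c ^ 2 * (2 * Real.pi * τ) by ring,
    Real.mul_rpow (x := c ^ 2) (by positivity) (by positivity), hpow]
  ring

lemma hasFDerivAt_gpdf (z : Fin n → ℝ) :
    HasFDerivAt (gpdf n τ) ((-τ⁻¹ * gpdf n τ z) • dotProductCLM z) z := by
  have hcoord (i : Fin n) := (hasFDerivAt_apply (𝕜 := ℝ) (F' := fun _ : Fin n => ℝ) i z).pow 2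
  have hsq : HasFDerivAt (fun z : Fin n → ℝ => ∑ i, z i ^ 2) ((2 : ℝ) • dotProductCLM z) z := by
    refine (HasFDerivAt.fun_sum fun i (_ : i ∈ Finset.univ) => hcoord i).congr_fderiv ?_
    ext v
    simp [Finset.mul_sum, mul_assoc]
  have hgpdf : gpdf n τ = fun z => (2 * Real.pi * τ) ^ (-(n : ℝ) / 2) *
      Real.exp (-(2 * τ)⁻¹ * ∑ i, z i ^ 2) := by
    ext z; rw [gpdf]; congr 2; ring
  rw [hgpdf]
  refine (((hsq.const_mul (-(2 * τ)⁻¹)).exp).const_mul _).congr_fderiv ?_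
  ext v
  simp
  ring

lemma fderiv_gpdf : fderiv ℝ (gpdf n τ) = fun z => (-τ⁻¹ * gpdf n τ z) • dotProductCLM z :=
  funext fun z => (hasFDerivAt_gpdf z).fderiv

lemma continuous_fderiv_gpdf : Continuous (fderiv ℝ (gpdf n τ)) := by
  rw [fderiv_gpdf]
  exact (continuous_const.mul continuous_gpdf).smul continuous_dotProductCLM

lemma norm_fderiv_gpdf_le (hτ : 0 ≤ τ) (w : Fin n → ℝ) :
    ‖fderiv ℝ (gpdf n τ) w‖ ≤ τ⁻¹ * n * (gpdf n τ w * ‖w‖) := by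
  rw [fderiv_gpdf, norm_smul, norm_mul, norm_neg, norm_inv, Real.norm_of_nonneg hτ,
    Real.norm_of_nonneg (gpdf_nonneg hτ w)]
  calc τ⁻¹ * gpdf n τ w * ‖dotProductCLM w‖ ≤ τ⁻¹ * gpdf n τ w * (n * ‖w‖) :=
        mul_le_mul_of_nonneg_left (by simpa using norm_dotProductCLM_le w)
          (mul_nonneg (inv_nonneg.2 hτ) (gpdf_nonneg hτ w))
    _ = _ := by ring

lemma gpdf_add_le (hτ : 0 < τ) (v : Fin n → ℝ) {d : Fin n → ℝ} (hd : ‖d‖ ≤ 1) :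
    gpdf n τ (v + d) ≤ Real.exp (n / (2 * τ)) * ∑ s ∈ signVectors n, gpdf n τ (v - s) := by
  have hcoord (i : Fin n) := exp_neg_add_sq_div_le hτ (v i)
    ((Real.norm_eq_abs _).symm.trans_le ((norm_le_pi_norm d i).trans hd))
  have hprod : ∏ i, Real.exp (-(v + d) i ^ 2 / (2 * τ))
      ≤ Real.exp (n / (2 * τ)) * ∑ s ∈ signVectors n, ∏ i, Real.exp (-(v - s) i ^ 2 / (2 * τ)) := by
    calc ∏ i, Real.exp (-(v + d) i ^ 2 / (2 * τ))
        ≤ ∏ i, (Real.exp (1 / (2 * τ)) *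
            ∑ s ∈ ({-1, 1} : Finset ℝ), Real.exp (-(v i - s) ^ 2 / (2 * τ))) :=
          Finset.prod_le_prod (fun _ _ => (Real.exp_pos _).le) fun i _ => hcoord i
      _ = _ := by
          rw [Finset.prod_mul_distrib, Finset.prod_const, Finset.card_univ, Fintype.card_fin,
            ← Real.exp_nat_mul, mul_one_div, Finset.prod_univ_sum]
          rfl
  calc gpdf n τ (v + d)
        = (2 * Real.pi * τ) ^ (-(n : ℝ) / 2) * ∏ i, Real.exp (-(v + d) i ^ 2 / (2 * τ)) :=
        gpdf_eq_mul_prod _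
    _ ≤ (2 * Real.pi * τ) ^ (-(n : ℝ) / 2) * (Real.exp (n / (2 * τ)) *
          ∑ s ∈ signVectors n, ∏ i, Real.exp (-(v - s) i ^ 2 / (2 * τ))) := by gcongr
    _ = _ := by
        rw [Finset.mul_sum, Finset.mul_sum, Finset.mul_sum]
        refine Finset.sum_congr rfl fun s _ => ?_
        rw [gpdf_eq_mul_prod]
        ring

lemma gpdf_add_mul_norm_le (hτ : 0 < τ) (v : Fin n → ℝ) {d : Fin n → ℝ} (hd : ‖d‖ ≤ 1) :
    gpdf n τ (v + d) * ‖v + d‖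
      ≤ Real.exp (n / (2 * τ)) * ∑ s ∈ signVectors n, gpdf n τ (v - s) * (2 + ‖v - s‖) := by
  have hnorm {s : Fin n → ℝ} (hs : s ∈ signVectors n) : ‖v + d‖ ≤ 2 + ‖v - s‖ :=
    calc ‖v + d‖ = ‖(v - s) + (d + s)‖ := by congr 1; abel
      _ ≤ ‖v - s‖ + (‖d‖ + ‖s‖) := (norm_add_le _ _).trans (by gcongr; exact norm_add_le _ _)
      _ ≤ 2 + ‖v - s‖ := by linarith [norm_le_one_of_mem_signVectors hs]
  calc gpdf n τ (v + d) * ‖v + d‖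
      ≤ (Real.exp (n / (2 * τ)) * ∑ s ∈ signVectors n, gpdf n τ (v - s)) * ‖v + d‖ := by
        gcongr
        exact gpdf_add_le hτ v hd
    _ = Real.exp (n / (2 * τ)) * ∑ s ∈ signVectors n, gpdf n τ (v - s) * ‖v + d‖ := by
        rw [mul_assoc, Finset.sum_mul]
    _ ≤ _ := by
        gcongr with s hs
        · exact gpdf_nonneg hτ.le _
        · exact hnorm hs

lemma integral_gauss_zero (hτ : 0 ≤ τ) (f : (Fin n → ℝ) → ℝ) :
    ∫ w, f w ∂gauss n 0 τ = ∫ w, gpdf n τ w * f w := by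
  simp only [gauss, sub_zero]
  rw [integral_withDensity_eq_integral_toReal_smul continuous_gpdf.measurable.ennreal_ofReal
    (ae_of_all _ fun _ => ENNReal.ofReal_lt_top)]
  simp [ENNReal.toReal_ofReal (gpdf_nonneg hτ _)]

lemma integral_inner_comp_gauss (hτ : 0 ≤ τ) {c : ℝ} (hc : 0 < c) (f : (Fin n → ℝ) → (Fin n → ℝ))
    (y : Fin n → ℝ) :
    ∫ w, (∑ i, w i * f (y + c • w) i) ∂gauss n 0 τ
      = -c⁻¹ * ∫ x, (∑ i, (y i - x i) * f x i) * gpdf n (c ^ 2 * τ) (y - x) := by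
  set H : (Fin n → ℝ) → ℝ := fun x => gpdf n τ (c⁻¹ • (x - y)) * ∑ i, (c⁻¹ • (x - y)) i * f x i
  have hH (w : Fin n → ℝ) : H (y + c • w) = gpdf n τ w * ∑ i, w i * f (y + c • w) i := by
    simp only [H, add_sub_cancel_left, smul_smul, inv_mul_cancel₀ hc.ne', one_smul]
  have hrescale (x : Fin n → ℝ) : (c ^ n)⁻¹ * H x
      = -c⁻¹ * ((∑ i, (y i - x i) * f x i) * gpdf n (c ^ 2 * τ) (y - x)) := by
    rw [← mul_assoc, inv_pow_mul_gpdf_inv_smul hτ hc, ← neg_sub, gpdf_neg, Finset.mul_sum,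
      Finset.sum_mul, Finset.mul_sum]
    refine Finset.sum_congr rfl fun i _ => ?_
    simp only [Pi.smul_apply, Pi.neg_apply, Pi.sub_apply, smul_eq_mul]
    ring
  calc ∫ w, (∑ i, w i * f (y + c • w) i) ∂gauss n 0 τ
      = ∫ w, H (y + c • w) := by rw [integral_gauss_zero hτ]; simp only [hH]
    _ = (c ^ n)⁻¹ * ∫ x, H x := by
        rw [Measure.integral_comp_smul volume (fun z => H (y + z)), integral_add_left_eq_self]
        simp [abs_of_pos hc]
    _ = _ := by rw [← integral_const_mul, ← integral_const_mul]; simp only [hrescale]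

end Gaussian

section Convolution

variable {n : ℕ} {τ : ℝ} {f : (Fin n → ℝ) → ℝ}

lemma hasFDerivAt_integral_mul_gpdf (hτ : 0 < τ) (hf : AEStronglyMeasurable f)
    (h0 : ∀ y, Integrable fun x => f x * gpdf n τ (y - x))
    (h1 : ∀ y, Integrable fun x => f x * ‖y - x‖ * gpdf n τ (y - x)) (y : Fin n → ℝ) :
    HasFDerivAt (fun u => ∫ x, f x * gpdf n τ (u - x))
      (∫ x, f x • fderiv ℝ (gpdf n τ) (y - x)) y := by
  set bound : (Fin n → ℝ) → ℝ := fun x => τ⁻¹ * n * Real.exp (n / (2 * τ)) *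
    ∑ s ∈ signVectors n, |f x| * (gpdf n τ (y - s - x) * (2 + ‖y - s - x‖))
  have hbound_int : Integrable bound := by
    refine (integrable_finsetSum _ fun s _ => ?_).const_mul _
    refine (((h0 (y - s)).norm.const_mul 2).add (h1 (y - s)).norm).congr (ae_of_all _ fun x => ?_)
    simp only [Pi.add_apply, norm_mul, Real.norm_eq_abs, abs_norm,
      abs_of_nonneg (gpdf_nonneg hτ.le _)]
    ring
  have h_bound : ∀ x, ∀ u ∈ Metric.ball y 1, ‖f x • fderiv ℝ (gpdf n τ) (u - x)‖ ≤ bound x := by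
    intro x u hu
    have hd : ‖u - y‖ ≤ 1 := (mem_ball_iff_norm.1 hu).le
    have key := gpdf_add_mul_norm_le hτ (y - x) hd
    rw [show y - x + (u - y) = u - x by abel] at key
    simp only [sub_right_comm y x] at key
    rw [norm_smul, Real.norm_eq_abs]
    calc |f x| * ‖fderiv ℝ (gpdf n τ) (u - x)‖
        ≤ |f x| * (τ⁻¹ * n * (gpdf n τ (u - x) * ‖u - x‖)) := by
          gcongr; exact norm_fderiv_gpdf_le hτ.le _
      _ ≤ |f x| * (τ⁻¹ * n * (Real.exp (n / (2 * τ)) *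
            ∑ s ∈ signVectors n, gpdf n τ (y - s - x) * (2 + ‖y - s - x‖))) := by gcongr
      _ = bound x := by
          simp only [bound, Finset.mul_sum]
          exact Finset.sum_congr rfl fun s _ => by ring
  have h_diff : ∀ x, ∀ u ∈ Metric.ball y 1,
      HasFDerivAt (fun u => f x * gpdf n τ (u - x)) (f x • fderiv ℝ (gpdf n τ) (u - x)) u := by
    intro x u _
    simpa using ((hasFDerivAt_gpdf (u - x)).differentiableAt.hasFDerivAt.comp u
      (hasFDerivAt_sub_const x)).const_mul (f x)
  exact hasFDerivAt_integral_of_dominated_of_fderiv_le (F := fun u x => f x * gpdf n τ (u - x))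
    (Metric.ball_mem_nhds y one_pos)
    (Eventually.of_forall fun _ =>
      hf.mul (continuous_gpdf.comp (continuous_const.sub continuous_id)).aestronglyMeasurable)
    (h0 y)
    (hf.smul
      (continuous_fderiv_gpdf.comp (continuous_const.sub continuous_id)).aestronglyMeasurable)
    (ae_of_all _ h_bound) hbound_int (ae_of_all _ h_diff)

lemma fderiv_integral_mul_gpdf_single (hτ : 0 < τ) (hf : AEStronglyMeasurable f)
    (h0 : ∀ y, Integrable fun x => f x * gpdf n τ (y - x))
    (h1 : ∀ y, Integrable fun x => f x * ‖y - x‖ * gpdf n τ (y - x))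
    (y : Fin n → ℝ) (i : Fin n) :
    fderiv ℝ (fun u => ∫ x, f x * gpdf n τ (u - x)) y (Pi.single i 1)
      = -τ⁻¹ * ∫ x, (y i - x i) * f x * gpdf n τ (y - x) := by
  have hint : Integrable fun x => f x • fderiv ℝ (gpdf n τ) (y - x) := by
    refine ((h1 y).norm.const_mul (τ⁻¹ * n)).mono'
      (hf.smul
        (continuous_fderiv_gpdf.comp (continuous_const.sub continuous_id)).aestronglyMeasurable)
      (ae_of_all _ fun x => ?_)
    rw [norm_smul, norm_mul, norm_mul, norm_norm, Real.norm_of_nonneg (gpdf_nonneg hτ.le _)]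
    calc ‖f x‖ * ‖fderiv ℝ (gpdf n τ) (y - x)‖
        ≤ ‖f x‖ * (τ⁻¹ * n * (gpdf n τ (y - x) * ‖y - x‖)) := by
          gcongr; exact norm_fderiv_gpdf_le hτ.le _
      _ = _ := by ring
  rw [(hasFDerivAt_integral_mul_gpdf hτ hf h0 h1 y).fderiv,
    ContinuousLinearMap.integral_apply hint, ← integral_const_mul]
  refine integral_congr_ae (ae_of_all _ fun x => ?_)
  simp only [smul_apply, fderiv_gpdf, dotProductCLM_single, smul_eq_mul, Pi.sub_apply]
  ring

lemma integrable_sub_apply_mul_mul_gpdf (hf : AEStronglyMeasurable f) {y : Fin n → ℝ}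
    (h1 : Integrable fun x => f x * ‖y - x‖ * gpdf n τ (y - x)) (i : Fin n) :
    Integrable fun x => (y i - x i) * f x * gpdf n τ (y - x) :=
  h1.norm.mono' (((continuous_const.sub (continuous_apply i)).aestronglyMeasurable.mul hf).mul
    (continuous_gpdf.comp (continuous_const.sub continuous_id)).aestronglyMeasurable)
    (ae_of_all _ fun x => by
      rw [norm_mul, norm_mul, norm_mul, norm_mul, norm_norm, mul_comm ‖y i - x i‖]
      gcongr
      exact norm_le_pi_norm (y - x) i)

end Convolution

section Smoothing

variable {n : ℕ} {τ : ℝ} {g : (Fin n → ℝ) → (Fin n → ℝ)}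

lemma smoothed_apply_eq_integral (y : Fin n → ℝ) (i : Fin n) :
    smoothed n τ g y i = ∫ x, g x i * gpdf n τ (y - x) := by
  rw [smoothed, ← integral_sub_left_eq_self _ volume y]
  simp only [sub_sub_cancel]

lemma diverg_smoothed (hτ : 0 < τ) (hg : Measurable g)
    (hint1 : ∀ y : Fin n → ℝ,
      Integrable (fun x => Real.sqrt (∑ i, (g x i) ^ 2) * gpdf n τ (y - x)))
    (hint2 : ∀ y : Fin n → ℝ,
      Integrable (fun x => Real.sqrt (∑ i, (g x i) ^ 2)
        * Real.sqrt (∑ i, (y i - x i) ^ 2) * gpdf n τ (y - x)))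
    (y : Fin n → ℝ) :
    diverg n (smoothed n τ g) y = -τ⁻¹ * ∫ x, (∑ i, (y i - x i) * g x i) * gpdf n τ (y - x) := by
  have hgpdf (z : Fin n → ℝ) : ‖gpdf n τ z‖ = gpdf n τ z :=
    Real.norm_of_nonneg (gpdf_nonneg hτ.le z)
  have hgi (x : Fin n → ℝ) (i : Fin n) : ‖g x i‖ ≤ √(∑ j, g x j ^ 2) :=
    (norm_le_pi_norm (g x) i).trans (norm_le_sqrt_sum_sq _)
  have hmeas (i : Fin n) : AEStronglyMeasurable fun x => g x i :=
    ((measurable_pi_apply i).comp hg).aestronglyMeasurable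
  have hcont (y : Fin n → ℝ) : Continuous fun x => gpdf n τ (y - x) :=
    continuous_gpdf.comp (continuous_const.sub continuous_id)
  have h0 (i : Fin n) (y : Fin n → ℝ) : Integrable fun x => g x i * gpdf n τ (y - x) :=
    (hint1 y).mono' ((hmeas i).mul (hcont y).aestronglyMeasurable) (ae_of_all _ fun x => by
      rw [norm_mul, hgpdf]; exact mul_le_mul_of_nonneg_right (hgi x i) (gpdf_nonneg hτ.le _))
  have h1 (i : Fin n) (y : Fin n → ℝ) : Integrable fun x => g x i * ‖y - x‖ * gpdf n τ (y - x) :=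
    (hint2 y).mono'
      (((hmeas i).mul (continuous_const.sub continuous_id).norm.aestronglyMeasurable).mul
        (hcont y).aestronglyMeasurable) (ae_of_all _ fun x => by
      rw [norm_mul, norm_mul, norm_norm, hgpdf]
      exact mul_le_mul_of_nonneg_right (mul_le_mul (hgi x i) (norm_le_sqrt_sum_sq (y - x))
        (norm_nonneg _) (Real.sqrt_nonneg _)) (gpdf_nonneg hτ.le _))
  calc diverg n (smoothed n τ g) y
      = ∑ i, -τ⁻¹ * ∫ x, (y i - x i) * g x i * gpdf n τ (y - x) := by
        refine Finset.sum_congr rfl fun i _ => ?_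
        simp_rw [smoothed_apply_eq_integral]
        exact fderiv_integral_mul_gpdf_single hτ (hmeas i) (h0 i) (h1 i) y i
    _ = _ := by
        rw [← Finset.mul_sum, ← integral_finsetSum _ fun i _ =>
          integrable_sub_apply_mul_mul_gpdf (hmeas i) (h1 i y) i]
        simp_rw [Finset.sum_mul]

end Smoothing

/-- Connection with SURE: for every `y`, the noise-free estimator equals
SURE applied to the Gaussian-smoothed prediction function:
`‖y − (g*φ_{ασ²})(y)‖₂² + (2/√α) E_{ω~N(0,σ²Iₙ)}[ωᵀ g(y + √α ω)]
  = ‖y − (g*φ_{ασ²})(y)‖₂² + 2σ² ∇·(g*φ_{ασ²})(y)`. -/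
theorem noise_free_cv_eq_sure_smoothed
    (n : ℕ) (σ α : ℝ) (hσ : 0 < σ) (hα : 0 < α)
    (g : (Fin n → ℝ) → (Fin n → ℝ)) (hg : Measurable g)
    (hint1 : ∀ y : Fin n → ℝ,
      Integrable (fun x => Real.sqrt (∑ i, (g x i) ^ 2) * gpdf n (α * σ ^ 2) (y - x)))
    (hint2 : ∀ y : Fin n → ℝ,
      Integrable (fun x => Real.sqrt (∑ i, (g x i) ^ 2)
        * Real.sqrt (∑ i, (y i - x i) ^ 2) * gpdf n (α * σ ^ 2) (y - x))) :
    ∀ y : Fin n → ℝ,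
      (∑ i, (y i - smoothed n (α * σ ^ 2) g y i) ^ 2)
        + (2 / Real.sqrt α)
          * ∫ w, (∑ i, w i * g (y + Real.sqrt α • w) i) ∂(gauss n 0 (σ ^ 2))
      = (∑ i, (y i - smoothed n (α * σ ^ 2) g y i) ^ 2)
        + 2 * σ ^ 2 * diverg n (smoothed n (α * σ ^ 2) g) y := by
  intro y
  congr 1
  rw [integral_inner_comp_gauss (sq_nonneg σ) (Real.sqrt_pos.2 hα), Real.sq_sqrt hα.le,
    diverg_smoothed (by positivity) hg hint1 hint2]
  field_simp
  rw [Real.sq_sqrt hα.le]
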